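/- Let 0 < a_1 ≤ ... ≤ a_n be integers, t > 1 with t ≤ n/2, and T ∈ H_t. Then the family V of subsets of [2t-1] whose weight Σ_{i∈F} a_i equals any fixed positive integer k' does not shatter T. -/

import Mathlib

def Ht (n t : ℕ) (T : Finset ℕ) : Prop :=
  T ⊆ Finset.Icc 1 n ∧ T.card = t ∧
  (∀ s ∈ T, (T.filter (· ≤ s)).card < t → 2 * (T.filter (· ≤ s)).card ≤ s) ∧
  (∀ s ∈ T, (T.filter (· ≤ s)).card = t → s < 2 * t)

/-!
The complement `D = [2t-1] \ T` has `t - 1` elements, and the prefix condition defining `H_t`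
says that `T` contains at most half of the points of every initial segment of `[2t-2]`. Hence
every tail `[y, 2t-1]` contains at least as many points of `T \ {2t-1}` as of `D`, which for
an increasing weight forces `a(D) ≤ a(T) - a_{2t-1} < a(T)`. A family of sets of weight `k'`
shattering `T` would contain a set `F ⊇ T` and a set `F ⊆ D`, giving `a(T) ≤ k' ≤ a(D)`.
-/

open Finset

theorem MonotoneOn.sum_le_sum_of_card_filter_le {α β : Type*} [LinearOrder α] [AddCommMonoid β]
    [PartialOrder β] [IsOrderedAddMonoid β] {s : Set α} {f : α → β} (hf : MonotoneOn f s)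
    (hf0 : ∀ x ∈ s, 0 ≤ f x) {S T : Finset α} (hS : ↑S ⊆ s) (hT : ↑T ⊆ s)
    (h : ∀ y ∈ s, #{x ∈ S | y ≤ x} ≤ #{x ∈ T | y ≤ x}) : ∑ x ∈ S, f x ≤ ∑ x ∈ T, f x := by
  induction S using Finset.induction_on_max generalizing T with
  | empty => exact sum_nonneg fun x hx => hf0 x (hT hx)
  | insert m S hlt ih =>
    have hms : m ∈ s := hS (mem_insert_self m S)
    have hmS : m ∉ S := fun hm => (hlt m hm).false
    -- match the largest point `m` of `S` with some point `m' ≥ m` of `T`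
    obtain ⟨m', hm'⟩ : {x ∈ T | m ≤ x}.Nonempty := by
      rw [← card_pos]
      refine lt_of_lt_of_le ?_ (h m hms)
      exact card_pos.2 ⟨m, mem_filter.2 ⟨mem_insert_self m S, le_rfl⟩⟩
    obtain ⟨hm'T, hmm'⟩ := mem_filter.1 hm'
    rw [sum_insert hmS, ← add_sum_erase T f hm'T]
    refine add_le_add (hf hms (hT hm'T) hmm') (ih (fun x hx => hS (by simp [hx]))
      (fun x hx => hT (mem_of_mem_erase hx)) fun y hy => ?_)
    by_cases hym : y ≤ m
    · have hcard := h y hy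
      rw [filter_insert, if_pos hym, card_insert_of_notMem (fun hm => hmS (mem_filter.1 hm).1)]
        at hcard
      have hm'y : m' ∈ {x ∈ T | y ≤ x} := mem_filter.2 ⟨hm'T, hym.trans hmm'⟩
      rw [filter_erase, card_erase_of_mem hm'y]
      omega
    · rw [filter_false_of_mem fun x hx hyx => hym (hyx.trans (hlt x hx).le), card_empty]
      exact Nat.zero_le _

theorem not_shatters_filter_sum_eq {α : Type*} [DecidableEq α] {U T : Finset α} {a : α → ℕ}
    (hlt : ∑ x ∈ U \ T, a x < ∑ x ∈ T, a x) (k : ℕ) :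
    ¬ {F ∈ U.powerset | ∑ x ∈ F, a x = k}.Shatters T := by
  intro hsh
  obtain ⟨F₁, hF₁, hTF₁⟩ := hsh (subset_refl T)
  obtain ⟨F₀, hF₀, hTF₀⟩ := hsh (empty_subset T)
  rw [mem_filter, mem_powerset] at hF₁ hF₀
  have hT_le : ∑ x ∈ T, a x ≤ k :=
    hF₁.2 ▸ sum_le_sum_of_subset (inter_eq_left.1 hTF₁)
  have hle_D : k ≤ ∑ x ∈ U \ T, a x :=
    hF₀.2 ▸ sum_le_sum_of_subset
      (subset_sdiff.2 ⟨hF₀.1, (disjoint_iff_inter_eq_empty.2 hTF₀).symm⟩)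
  omega

namespace Ht

variable {n t : ℕ} {T : Finset ℕ}

theorem two_mul_card_filter_le (hT : Ht n t T) {x z : ℕ} (hz : z ∈ T) (hxz : x < z) :
    2 * #{y ∈ T | y ≤ x} ≤ x := by
  obtain ⟨-, hcard, hlow, -⟩ := hT
  rcases eq_empty_or_nonempty {y ∈ T | y ≤ x} with hempty | hne
  · simp [hempty]
  obtain ⟨hsT, hsx⟩ := mem_filter.1 (max'_mem _ hne)
  have hrank : {y ∈ T | y ≤ max' _ hne} = {y ∈ T | y ≤ x} :=
    filter_congr fun y hy => ⟨fun h => h.trans hsx, fun h => le_max' _ y (mem_filter.2 ⟨hy, h⟩)⟩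
  have hlt : #{y ∈ T | y ≤ x} < t :=
    hcard ▸ card_lt_card (filter_ssubset.2 ⟨z, hz, hxz.not_ge⟩)
  have hbound := hlow _ hsT (by rw [hrank]; exact hlt)
  rw [hrank] at hbound
  omega

theorem isGreatest (hT : Ht n t T) (ht : 0 < t) : IsGreatest (T : Set ℕ) (2 * t - 1) := by
  obtain ⟨hTn, hcard, -, htop⟩ := id hT
  have hne : T.Nonempty := card_pos.1 (hcard ▸ ht)
  have hm : T.max' hne ∈ T := max'_mem T hne
  have hm_lt : T.max' hne < 2 * t :=
    htop _ hm (by rw [filter_true_of_mem fun y hy => le_max' T y hy, hcard])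
  have hm_pos : 1 ≤ T.max' hne := (mem_Icc.1 (hTn hm)).1
  have hbelow : {y ∈ T | y ≤ T.max' hne - 1} = T.erase (T.max' hne) := by
    ext y
    simp only [mem_filter, mem_erase]
    constructor
    · rintro ⟨hy, hle⟩
      exact ⟨by omega, hy⟩
    · rintro ⟨hne, hy⟩
      exact ⟨hy, by have := le_max' T y hy; omega⟩
  have hbound := hT.two_mul_card_filter_le hm (x := T.max' hne - 1) (by omega)
  rw [hbelow, card_erase_of_mem hm, hcard] at hbound
  have hmax : T.max' hne = 2 * t - 1 := by omega
  exact hmax ▸ T.isGreatest_max' hne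

theorem subset_Icc (hT : Ht n t T) (ht : 0 < t) : T ⊆ Icc 1 (2 * t - 1) := fun _ hx =>
  mem_Icc.2 ⟨(mem_Icc.1 (hT.1 hx)).1, (hT.isGreatest ht).2 hx⟩

theorem card_filter_sdiff_le (hT : Ht n t T) (ht : 0 < t) {y : ℕ} (hy : y ∈ Icc 1 (2 * t - 1)) :
    #{x ∈ Icc 1 (2 * t - 1) \ T | y ≤ x} ≤ #{x ∈ T.erase (2 * t - 1) | y ≤ x} := by
  obtain ⟨hy1, hy2⟩ := mem_Icc.1 hy
  have hTsub := hT.subset_Icc ht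
  have hmem : 2 * t - 1 ∈ T := (hT.isGreatest ht).1
  have hmem_tail : 2 * t - 1 ∈ {x ∈ T | y ≤ x} := mem_filter.2 ⟨hmem, hy2⟩
  have hsplit := card_filter_add_card_filter_not (s := T) (p := fun x => y ≤ x)
  have htail : {x ∈ Icc 1 (2 * t - 1) | y ≤ x} = Icc y (2 * t - 1) := by
    ext x
    simp only [mem_filter, mem_Icc]
    omega
  have hhead : {x ∈ T | ¬ y ≤ x} = {x ∈ T | x ≤ y - 1} := filter_congr fun x _ => by omega
  have hsdiff : {x ∈ Icc 1 (2 * t - 1) \ T | y ≤ x} =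
      {x ∈ Icc 1 (2 * t - 1) | y ≤ x} \ {x ∈ T | y ≤ x} := by
    ext x
    simp only [mem_filter, mem_sdiff]
    tauto
  have hballot := hT.two_mul_card_filter_le hmem (x := y - 1) (by omega)
  rw [hsdiff, card_sdiff_of_subset (filter_subset_filter _ hTsub), htail,
    Nat.card_Icc, filter_erase, card_erase_of_mem hmem_tail]
  rw [hhead, hT.2.1] at hsplit
  have hTtail : #{x ∈ T | y ≤ x} ≤ #(Icc y (2 * t - 1)) :=
    htail ▸ card_le_card (filter_subset_filter _ hTsub)
  rw [Nat.card_Icc] at hTtail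
  omega

theorem sum_sdiff_lt_sum (hT : Ht n t T) (ht : 0 < t) {a : ℕ → ℕ}
    (ha : MonotoneOn a (Icc 1 (2 * t - 1) : Set ℕ)) (ha0 : 0 < a (2 * t - 1)) :
    ∑ x ∈ Icc 1 (2 * t - 1) \ T, a x < ∑ x ∈ T, a x := by
  have hTsub := hT.subset_Icc ht
  have hle := ha.sum_le_sum_of_card_filter_le (fun _ _ => Nat.zero_le _)
    (coe_subset.2 sdiff_subset) (coe_subset.2 ((erase_subset _ _).trans hTsub))
    fun y hy => hT.card_filter_sdiff_le ht (mem_coe.1 hy)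
  rw [← add_sum_erase T a (hT.isGreatest ht).1]
  omega

end Ht

theorem stmt10_general (n t : ℕ) (a : ℕ → ℕ)
    (hpos : ∀ i ∈ Finset.Icc 1 n, 0 < a i)
    (hmono : ∀ i j, 1 ≤ i → i ≤ j → j ≤ n → a i ≤ a j)
    (ht : 1 < t) (htn : 2 * t ≤ n) (T : Finset ℕ) (hT : Ht n t T)
    (k' : ℕ) :
    ¬ (∀ Y ⊆ T, ∃ F, F ⊆ Finset.Icc 1 (2 * t - 1) ∧
        (∑ i ∈ F, a i) = k' ∧ F ∩ T = Y) := by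
  have ha : MonotoneOn a (Icc 1 (2 * t - 1) : Set ℕ) := fun i hi j hj hij =>
    hmono i j (mem_Icc.1 hi).1 hij (by have := (mem_Icc.1 hj).2; omega)
  have hlt := hT.sum_sdiff_lt_sum (by omega) ha (hpos _ (mem_Icc.2 ⟨by omega, by omega⟩))
  intro hshatter
  refine not_shatters_filter_sum_eq hlt k' fun Y hY => ?_
  obtain ⟨F, hFU, hFsum, hFT⟩ := hshatter Y hY
  exact ⟨F, mem_filter.2 ⟨mem_powerset.2 hFU, hFsum⟩, by rw [inter_comm, hFT]⟩

/-- for `0 < a₁ ≤ … ≤ a_n`, `1 < t ≤ n/2`, `T ∈ H_t` and any fixed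
positive integer `k'`, the family `{F ⊆ [2t-1] : Σ_{i∈F} aᵢ = k'}` does not
shatter `T`. -/
theorem stmt10 (n t : ℕ) (a : ℕ → ℕ)
    (hpos : ∀ i ∈ Finset.Icc 1 n, 0 < a i)
    (hmono : ∀ i j, 1 ≤ i → i ≤ j → j ≤ n → a i ≤ a j)
    (ht : 1 < t) (htn : 2 * t ≤ n) (T : Finset ℕ) (hT : Ht n t T)
    (k' : ℕ) (hk' : 0 < k') :
    ¬ (∀ Y ⊆ T, ∃ F, F ⊆ Finset.Icc 1 (2 * t - 1) ∧
        (∑ i ∈ F, a i) = k' ∧ F ∩ T = Y) :=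
  stmt10_general n t a hpos hmono ht htn T hT k'
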